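/- arXiv:2311.06762 — 10 statements merged into one kernel-verified Lean document; each statement's English description precedes it below -/
import Mathlib

section
/- If a pairwise comparison system is consistent, then the solution of the system w_b/w_i = a_{bi}, w_i/w_w = a_{iw}, w_b/w_w = a_{bw} with ∑ w_i = 1 and w_i > 0 is unique: any two positive weight vectors summing to 1 satisfying these ratio equations are equal. -/
/-! The ratios `u i / u w` pin `u` down up to the scalar `u w`, and the normalisation
`∑ i, u i = 1` then fixes that scalar. -/

section Proportional

variable {ι K : Type*} [Field K]

theorem eq_smul_of_forall_div_eq {u a : ι → K} {j : ι} (hj : u j ≠ 0)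
    (h : ∀ i, u i / u j = a i) : u = u j • a := by
  funext i
  rw [Pi.smul_apply, smul_eq_mul, ← h i, mul_div_cancel₀ _ hj]

theorem eq_of_eq_smul_of_sum_eq [Fintype ι] {a u v : ι → K} {s t : K}
    (hu : u = s • a) (hv : v = t • a) (hsum : ∑ i, u i = ∑ i, v i) (hne : ∑ i, u i ≠ 0) :
    u = v := by
  subst hu hv
  simp only [Pi.smul_apply, smul_eq_mul, ← Finset.mul_sum] at hsum hne
  rw [mul_left_inj' (right_ne_zero_of_mul hne)] at hsum
  rw [hsum]

end Proportional

theorem consistent_pcs_weights_unique_general (n : ℕ) (w : Fin n)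
    (aw : Fin n → ℝ)
    (u v : Fin n → ℝ)
    (hu : ∀ i, 0 < u i) (hv : ∀ i, 0 < v i)
    (hus : ∑ i, u i = 1) (hvs : ∑ i, v i = 1)
    (hu2 : ∀ i, u i / u w = aw i)
    (hv2 : ∀ i, v i / v w = aw i) :
    u = v :=
  eq_of_eq_smul_of_sum_eq (eq_smul_of_forall_div_eq (hu w).ne' hu2)
    (eq_smul_of_forall_div_eq (hv w).ne' hv2) (hus.trans hvs.symm) (hus ▸ one_ne_zero)

theorem consistent_pcs_weights_unique (n : ℕ) (hn : 2 ≤ n) (b w : Fin n) (hbw : b ≠ w)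
    (ab aw : Fin n → ℝ)
    (hab : ∀ i, 0 < ab i) (haw : ∀ i, 0 < aw i)
    (habb : ab b = 1) (haww : aw w = 1)
    (hcons : ∀ i, ab i * aw i = ab w)
    (u v : Fin n → ℝ)
    (hu : ∀ i, 0 < u i) (hv : ∀ i, 0 < v i)
    (hus : ∑ i, u i = 1) (hvs : ∑ i, v i = 1)
    (hu1 : ∀ i, u b / u i = ab i) (hu2 : ∀ i, u i / u w = aw i) (hu3 : u b / u w = ab w)
    (hv1 : ∀ i, v b / v i = ab i) (hv2 : ∀ i, v i / v w = aw i) (hv3 : v b / v w = ab w) :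
    u = v :=
  consistent_pcs_weights_unique_general n w aw u v hu hv hus hvs hu2 hv2
end

section
/- Let positive reals ã_{bj}, ã_{jw}, ã_{bw} satisfy ã_{bj}·ã_{jw} = ã_{bw}, and let η_{bj} = max(a_{bj}/ã_{bj}, ã_{bj}/a_{bj}), η_{jw} = max(a_{jw}/ã_{jw}, ã_{jw}/a_{jw}), η_{bw} = max(a_{bw}/ã_{bw}, ã_{bw}/a_{bw}). If a_{bj}·a_{jw} > a_{bw} and ε_j = (a_{bj}·a_{jw}/a_{bw})^{1/3}, then max(η_{bj}, η_{jw}, η_{bw}) ≥ ε_j. -/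
/-! With `ã_bj · ã_jw = ã_bw`, the ratio `a_bj a_jw / a_bw` factors as
`(a_bj / ã_bj) · (a_jw / ã_jw) · (ã_bw / a_bw)`. Each factor is bounded by the maximal
deviation `η`, so the ratio is at most `η³`, and taking cube roots gives `ε_j ≤ η`. -/

theorem Real.mul_mul_rpow_one_div_three_le {x y z m : ℝ} (hx : 0 ≤ x) (hy : 0 ≤ y) (hz : 0 ≤ z)
    (hxm : x ≤ m) (hym : y ≤ m) (hzm : z ≤ m) : (x * y * z) ^ ((1 : ℝ) / 3) ≤ m := by
  have hm : 0 ≤ m := hx.trans hxm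
  have hcube : x * y * z ≤ m ^ 3 := by
    calc x * y * z ≤ m * m * m := by gcongr
      _ = m ^ 3 := by ring
  calc (x * y * z) ^ ((1 : ℝ) / 3) ≤ (m ^ 3) ^ ((3 : ℕ)⁻¹ : ℝ) := by
        rw [one_div, ← Nat.cast_ofNat]
        exact Real.rpow_le_rpow (by positivity) hcube (by positivity)
    _ = m := Real.pow_rpow_inv_natCast hm three_ne_zero

theorem div_eq_div_mul_div_mul_div_of_mul_eq {a b c s t u : ℝ} (hs : s ≠ 0) (ht : t ≠ 0)
    (hcons : s * t = u) : a * b / c = a / s * (b / t) * (u / c) := by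
  subst hcons
  rcases eq_or_ne c 0 with rfl | hc
  · simp
  · field_simp

theorem eps_lower_bound_general (abj ajw abw tbj tjw tbw : ℝ)
    (h1 : 0 < abj) (h2 : 0 < ajw) (h3 : 0 < abw)
    (h4 : 0 < tbj) (h5 : 0 < tjw)
    (hcons : tbj * tjw = tbw) :
    (abj * ajw / abw) ^ ((1 : ℝ) / 3) ≤
      max (max (abj / tbj) (tbj / abj)) (max (max (ajw / tjw) (tjw / ajw))
        (max (abw / tbw) (tbw / abw))) := by
  have hbw : 0 < tbw := hcons ▸ mul_pos h4 h5
  rw [div_eq_div_mul_div_mul_div_of_mul_eq h4.ne' h5.ne' hcons]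
  exact Real.mul_mul_rpow_one_div_three_le (by positivity) (by positivity) (by positivity)
    (le_max_of_le_left (le_max_left _ _))
    (le_max_of_le_right (le_max_of_le_left (le_max_left _ _)))
    (le_max_of_le_right (le_max_of_le_right (le_max_right _ _)))

theorem eps_lower_bound (abj ajw abw tbj tjw tbw : ℝ)
    (h1 : 0 < abj) (h2 : 0 < ajw) (h3 : 0 < abw)
    (h4 : 0 < tbj) (h5 : 0 < tjw) (h6 : 0 < tbw)
    (hcons : tbj * tjw = tbw)
    (hgt : abw < abj * ajw) :
    (abj * ajw / abw) ^ ((1 : ℝ) / 3) ≤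
      max (max (abj / tbj) (tbj / abj)) (max (max (ajw / tjw) (tjw / ajw))
        (max (abw / tbw) (tbw / abw))) :=
  eps_lower_bound_general abj ajw abw tbj tjw tbw h1 h2 h3 h4 h5 hcons
end

section
/- Let positive reals ã_{bj}, ã_{jw}, ã_{bw} satisfy ã_{bj}·ã_{jw} = ã_{bw}. Then for ε_j = max(a_{bj}·a_{jw}/a_{bw}, a_{bw}/(a_{bj}·a_{jw}))^{1/3}, at least one of the six ratios a_{bj}/ã_{bj}, ã_{bj}/a_{bj}, a_{jw}/ã_{jw}, ã_{jw}/a_{jw}, a_{bw}/ã_{bw}, ã_{bw}/a_{bw} is at least ε_j. -/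
/-!
Put `x = a_bj / ã_bj`, `y = a_jw / ã_jw`, `z = a_bw / ã_bw`. Consistency gives
`a_bj a_jw / a_bw = x y / z`, so `ε_j³ = max (x y / z) (x y / z)⁻¹`. The map `r ↦ max r r⁻¹` is
submultiplicative on positive elements and invariant under inversion (it is `exp |log r|`), hence
`ε_j³` is at most the product of the three values `max r r⁻¹` for `r = x, y, z`, and so at most the
cube of the largest of the six ratios.
-/

section MaxInv

variable {α : Type*} [Field α] [LinearOrder α] [IsStrictOrderedRing α] {x y z : α}

lemma max_inv_mul_le_mul (hx : 0 < x) (hy : 0 < y) :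
    max (x * y) (x * y)⁻¹ ≤ max x x⁻¹ * max y y⁻¹ := by
  have hx' : 0 < max x x⁻¹ := lt_max_of_lt_left hx
  rw [mul_inv]
  exact max_le (mul_le_mul (le_max_left _ _) (le_max_left _ _) hy.le hx'.le)
    (mul_le_mul (le_max_right _ _) (le_max_right _ _) (inv_pos.2 hy).le hx'.le)

lemma max_inv_mul_div_le_pow_three (hx : 0 < x) (hy : 0 < y) (hz : 0 < z) :
    max (x * y / z) (x * y / z)⁻¹ ≤ max (max x x⁻¹) (max (max y y⁻¹) (max z z⁻¹)) ^ 3 := by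
  set M := max (max x x⁻¹) (max (max y y⁻¹) (max z z⁻¹))
  have hzinv : max z⁻¹ z⁻¹⁻¹ = max z z⁻¹ := by rw [inv_inv, max_comm]
  have hxM : max x x⁻¹ ≤ M := le_max_left _ _
  have hyM : max y y⁻¹ ≤ M := le_max_of_le_right (le_max_left _ _)
  have hzM : max z z⁻¹ ≤ M := le_max_of_le_right (le_max_right _ _)
  have hx₀ : 0 ≤ max x x⁻¹ := le_max_of_le_left hx.le
  have hy₀ : 0 ≤ max y y⁻¹ := le_max_of_le_left hy.le
  calc max (x * y / z) (x * y / z)⁻¹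
      ≤ max (x * y) (x * y)⁻¹ * max z⁻¹ z⁻¹⁻¹ := by
        simpa only [div_eq_mul_inv] using max_inv_mul_le_mul (mul_pos hx hy) (inv_pos.2 hz)
    _ ≤ max x x⁻¹ * max y y⁻¹ * max z z⁻¹ := by
        rw [hzinv]
        gcongr
        exact max_inv_mul_le_mul hx hy
    _ ≤ M * M * M := by gcongr
    _ = M ^ 3 := by ring

end MaxInv

theorem eps_j_le_max_ratios_general (abj ajw abw tbj tjw tbw : ℝ)
    (h1 : 0 < abj) (h2 : 0 < ajw) (h3 : 0 < abw)
    (h4 : 0 < tbj) (h5 : 0 < tjw)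
    (hcons : tbj * tjw = tbw) :
    (max (abj * ajw / abw) (abw / (abj * ajw))) ^ ((1 : ℝ) / 3) ≤
      max (max (abj / tbj) (tbj / abj)) (max (max (ajw / tjw) (tjw / ajw))
        (max (abw / tbw) (tbw / abw))) := by
  subst hcons
  have hratio : abj * ajw / abw = abj / tbj * (ajw / tjw) / (abw / (tbj * tjw)) := by
    field_simp
  rw [← inv_div (abj * ajw) abw, ← inv_div abj tbj, ← inv_div ajw tjw, ← inv_div abw (tbj * tjw),
    hratio, one_div, Real.rpow_inv_le_iff_of_pos (by positivity) (by positivity) three_pos,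
    Real.rpow_ofNat]
  exact max_inv_mul_div_le_pow_three (div_pos h1 h4) (div_pos h2 h5) (by positivity)

theorem eps_j_le_max_ratios (abj ajw abw tbj tjw tbw : ℝ)
    (h1 : 0 < abj) (h2 : 0 < ajw) (h3 : 0 < abw)
    (h4 : 0 < tbj) (h5 : 0 < tjw) (h6 : 0 < tbw)
    (hcons : tbj * tjw = tbw) :
    (max (abj * ajw / abw) (abw / (abj * ajw))) ^ ((1 : ℝ) / 3) ≤
      max (max (abj / tbj) (tbj / abj)) (max (max (ajw / tjw) (tjw / ajw))
        (max (abw / tbw) (tbw / abw))) :=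
  eps_j_le_max_ratios_general abj ajw abw tbj tjw tbw h1 h2 h3 h4 h5 hcons
end

section
/- Let positive reals ã_{bi}, ã_{iw}, ã_{bj}, ã_{jw}, ã_{bw} satisfy ã_{bi}·ã_{iw} = ã_{bw} and ã_{bj}·ã_{jw} = ã_{bw}, and let ε_{i,j} = max(a_{bi}·a_{iw}/(a_{bj}·a_{jw}), a_{bj}·a_{jw}/(a_{bi}·a_{iw}))^{1/4}. Then the maximum of the eight ratios a_{bi}/ã_{bi}, ã_{bi}/a_{bi}, a_{iw}/ã_{iw}, ã_{iw}/a_{iw}, a_{bj}/ã_{bj}, ã_{bj}/a_{bj}, a_{jw}/ã_{jw}, ã_{jw}/a_{jw} is at least ε_{i,j}. -/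
/-! Since `ã_bi ã_iw = ã_bj ã_jw`, the ratio `a_bi a_iw / (a_bj a_jw)` is the product of the four
ratios `a_bi / ã_bi`, `a_iw / ã_iw`, `ã_bj / a_bj`, `ã_jw / a_jw`, each at most the maximum `M` of
the eight ratios; symmetrically for its inverse. So both are at most `M ^ 4`. -/

theorem mul_div_mul_eq_div_mul_div_mul_div_mul_div {K : Type*} [Field K] {a b c d t s u v : K}
    (hts : t * s ≠ 0) (h : t * s = u * v) :
    a * b / (c * d) = a / t * (b / s) * (u / c) * (v / d) := by
  calc a * b / (c * d) = a * b / (c * d) * (u * v / (t * s)) := by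
        rw [← h, div_self hts, mul_one]
    _ = a / t * (b / s) * (u / c) * (v / d) := by ring

theorem mul_div_mul_le_pow_four {a b c d t s u v M : ℝ} (ha : 0 ≤ a) (hb : 0 ≤ b)
    (hc : 0 ≤ c) (hd : 0 ≤ d) (ht : 0 < t) (hs : 0 < s) (hu : 0 ≤ u) (hv : 0 ≤ v)
    (h : t * s = u * v) (hat : a / t ≤ M) (hbs : b / s ≤ M) (huc : u / c ≤ M)
    (hvd : v / d ≤ M) : a * b / (c * d) ≤ M ^ 4 := by
  have hM : 0 ≤ M := (div_nonneg ha ht.le).trans hat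
  rw [mul_div_mul_eq_div_mul_div_mul_div_mul_div (mul_pos ht hs).ne' h]
  calc a / t * (b / s) * (u / c) * (v / d) ≤ M * M * M * M := by gcongr
    _ = M ^ 4 := by ring

theorem max_div_rpow_one_div_four_le {a b c d t s u v M : ℝ} (ha : 0 < a) (hb : 0 < b)
    (hc : 0 < c) (hd : 0 < d) (ht : 0 < t) (hs : 0 < s) (hu : 0 < u) (hv : 0 < v)
    (h : t * s = u * v) (hat : a / t ≤ M) (hta : t / a ≤ M) (hbs : b / s ≤ M)
    (hsb : s / b ≤ M) (hcu : c / u ≤ M) (huc : u / c ≤ M) (hdv : d / v ≤ M)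
    (hvd : v / d ≤ M) :
    max (a * b / (c * d)) (c * d / (a * b)) ^ ((1 : ℝ) / 4) ≤ M := by
  have hM : 0 ≤ M := (div_pos ha ht).le.trans hat
  have key : max (a * b / (c * d)) (c * d / (a * b)) ≤ M ^ 4 :=
    max_le
      (mul_div_mul_le_pow_four ha.le hb.le hc.le hd.le ht hs hu.le hv.le h hat hbs huc hvd)
      (mul_div_mul_le_pow_four hc.le hd.le ha.le hb.le hu hv ht.le hs.le h.symm hcu hdv hta hsb)
  rw [one_div, Real.rpow_inv_le_iff_of_pos (by positivity) hM four_pos]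
  exact_mod_cast key

theorem eps_ij_le_max_ratios_general (abi aiw abj ajw : ℝ) (tbi tiw tbj tjw tbw : ℝ)
    (h1 : 0 < abi) (h2 : 0 < aiw) (h3 : 0 < abj) (h4 : 0 < ajw)
    (h5 : 0 < tbi) (h6 : 0 < tiw) (h7 : 0 < tbj) (h8 : 0 < tjw)
    (hconsi : tbi * tiw = tbw) (hconsj : tbj * tjw = tbw) :
    (max (abi * aiw / (abj * ajw)) (abj * ajw / (abi * aiw))) ^ ((1 : ℝ) / 4) ≤
      max (max (max (abi / tbi) (tbi / abi)) (max (aiw / tiw) (tiw / aiw)))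
        (max (max (abj / tbj) (tbj / abj)) (max (ajw / tjw) (tjw / ajw))) := by
  apply max_div_rpow_one_div_four_le h1 h2 h3 h4 h5 h6 h7 h8 (hconsi.trans hconsj.symm)
  all_goals simp

theorem eps_ij_le_max_ratios (abi aiw abj ajw : ℝ) (tbi tiw tbj tjw tbw : ℝ)
    (h1 : 0 < abi) (h2 : 0 < aiw) (h3 : 0 < abj) (h4 : 0 < ajw)
    (h5 : 0 < tbi) (h6 : 0 < tiw) (h7 : 0 < tbj) (h8 : 0 < tjw) (h9 : 0 < tbw)
    (hconsi : tbi * tiw = tbw) (hconsj : tbj * tjw = tbw) :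
    (max (abi * aiw / (abj * ajw)) (abj * ajw / (abi * aiw))) ^ ((1 : ℝ) / 4) ≤
      max (max (max (abi / tbi) (tbi / abi)) (max (aiw / tiw) (tiw / aiw)))
        (max (max (abj / tbj) (tbj / abj)) (max (ajw / tjw) (tjw / ajw))) :=
  eps_ij_le_max_ratios_general abi aiw abj ajw tbi tiw tbj tjw tbw h1 h2 h3 h4 h5 h6 h7 h8 hconsi
    hconsj
end

section
/- Suppose for all i in D, a_{bi}·a_{iw} ≥ a_{bw}/ε³ where ε = ε_{j_0} = (a_{bj_0}·a_{j_0w}/a_{bw})^{1/3} ≥ 1 and a_{bj_0}·a_{j_0w} ≥ a_{bi}·a_{iw} for all i ∈ D, and max over i,j of ε_i, ε_{i,j} equals ε_{j_0}. Define ã_{bi} = (ε·a_{bi}·a_{bw}/a_{iw})^{1/2}, ã_{iw} = (ε·a_{iw}·a_{bw}/a_{bi})^{1/2}, ã_{bw} = ε·a_{bw}. Then ã_{bi}·ã_{iw} = ã_{bw} for all i ∈ D, and all the ratios a_{bi}/ã_{bi}, ã_{bi}/a_{bi}, a_{iw}/ã_{iw}, ã_{iw}/a_{iw}, a_{bw}/ã_{bw},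 ã_{bw}/a_{bw} are at most ε. -/
/-!
With `p i = ab i * aw i`, the modified values satisfy `tb i ^ 2 / ab i ^ 2 = ε * abw / p i` and
`ab i ^ 2 / tb i ^ 2 = p i / (ε * abw)` (and the same for `tw`), so all ratio bounds reduce to
`abw / ε ≤ p i ≤ ε ^ 3 * abw`. The upper bound is `ε_i ≤ ε`; the lower bound comes from
`ε_{i,j₀} ^ 4 ≥ p j₀ / p i = ε ^ 3 * abw / p i`.
-/

open Real

lemma le_pow_mul_of_max_div_rpow_le {x y ε : ℝ} {n : ℕ} (hn : n ≠ 0) (hx : 0 < x) (hy : 0 < y)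
    (hε : 0 ≤ ε) (h : max (x / y) (y / x) ^ ((1 : ℝ) / n) ≤ ε) :
    x ≤ ε ^ n * y ∧ y ≤ ε ^ n * x := by
  rwa [one_div, rpow_inv_le_iff_of_pos (by positivity) hε (by positivity), rpow_natCast,
    max_le_iff, div_le_iff₀ hy, div_le_iff₀ hx] at h

section GeometricScaling

variable {a b c ε : ℝ}

lemma sqrt_mul_div_mul_sqrt_mul_div (ha : 0 < a) (hb : 0 < b) (hc : 0 ≤ c) :
    √(c * a / b) * √(c * b / a) = c := by
  rw [← sqrt_mul (by positivity), show c * a / b * (c * b / a) = c ^ 2 by field_simp,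
    sqrt_sq hc]

lemma div_sqrt_mul_div_le (ha : 0 < a) (hb : 0 < b) (hc : 0 < c) (hε : 0 ≤ ε)
    (h : a * b ≤ ε ^ 2 * c) : a / √(c * a / b) ≤ ε := by
  rw [div_le_iff₀ (by positivity), ← sqrt_sq hε, ← sqrt_mul (sq_nonneg ε),
    le_sqrt ha.le (by positivity), mul_div_assoc', le_div_iff₀ hb]
  nlinarith

lemma sqrt_mul_div_div_le (ha : 0 < a) (hb : 0 < b) (hε : 0 ≤ ε)
    (h : c ≤ ε ^ 2 * (a * b)) : √(c * a / b) / a ≤ ε := by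
  rw [div_le_iff₀ ha, sqrt_le_iff, div_le_iff₀ hb]
  exact ⟨by positivity, by nlinarith⟩

lemma geometric_rescaling_ratios_le (ha : 0 < a) (hb : 0 < b) (hc : 0 < c) (hε : 0 < ε)
    (hupper : a * b ≤ ε ^ 3 * c) (hlower : c ≤ ε * (a * b)) :
    a / √(ε * c * a / b) ≤ ε ∧ √(ε * c * a / b) / a ≤ ε ∧
      b / √(ε * c * b / a) ≤ ε ∧ √(ε * c * b / a) / b ≤ ε := by
  have hup : a * b ≤ ε ^ 2 * (ε * c) := by linarith
  have hlo : ε * c ≤ ε ^ 2 * (a * b) := by nlinarith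
  exact ⟨div_sqrt_mul_div_le ha hb (by positivity) hε.le hup,
    sqrt_mul_div_div_le ha hb hε.le hlo,
    div_sqrt_mul_div_le hb ha (by positivity) hε.le (by linarith),
    sqrt_mul_div_div_le hb ha hε.le (by linarith)⟩

end GeometricScaling

theorem optimal_modification_case_j0_general {ι : Type*} (D : Finset ι)
    (ab aw : ι → ℝ) (abw : ℝ) (j0 : ι) (hj0 : j0 ∈ D)
    (hab : ∀ i ∈ D, 0 < ab i) (haw : ∀ i ∈ D, 0 < aw i) (habw : 0 < abw)
    (ε : ℝ) (hε : ε = (ab j0 * aw j0 / abw) ^ ((1 : ℝ) / 3)) (hε1 : 1 ≤ ε)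
    (hmaxeps : ∀ i ∈ D,
      (max (ab i * aw i / abw) (abw / (ab i * aw i))) ^ ((1 : ℝ) / 3) ≤ ε ∧
      ∀ j ∈ D, (max (ab i * aw i / (ab j * aw j))
        (ab j * aw j / (ab i * aw i))) ^ ((1 : ℝ) / 4) ≤ ε)
    (tb tw : ι → ℝ) (tbw : ℝ)
    (htb : ∀ i ∈ D, tb i = (ε * ab i * abw / aw i) ^ ((1 : ℝ) / 2))
    (htw : ∀ i ∈ D, tw i = (ε * aw i * abw / ab i) ^ ((1 : ℝ) / 2))
    (htbw : tbw = ε * abw) :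
    (∀ i ∈ D, tb i * tw i = tbw) ∧
    (∀ i ∈ D, ab i / tb i ≤ ε ∧ tb i / ab i ≤ ε ∧
      aw i / tw i ≤ ε ∧ tw i / aw i ≤ ε) ∧
    abw / tbw ≤ ε ∧ tbw / abw ≤ ε := by
  have hε0 : 0 < ε := one_pos.trans_le hε1
  have hp : ∀ i ∈ D, 0 < ab i * aw i := fun i hi => mul_pos (hab i hi) (haw i hi)
  have hε3 : ε ^ 3 * abw = ab j0 * aw j0 := by
    rw [← eq_div_iff habw.ne', hε, show (1 : ℝ) / 3 = ((3 : ℕ) : ℝ)⁻¹ by norm_num]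
    exact rpow_inv_natCast_pow (div_pos (hp j0 hj0) habw).le three_ne_zero
  have hupper : ∀ i ∈ D, ab i * aw i ≤ ε ^ 3 * abw := fun i hi =>
    (le_pow_mul_of_max_div_rpow_le three_ne_zero (hp i hi) habw hε0.le
      (by exact_mod_cast (hmaxeps i hi).1)).1
  have hlower : ∀ i ∈ D, abw ≤ ε * (ab i * aw i) := by
    intro i hi
    have h := (le_pow_mul_of_max_div_rpow_le four_ne_zero (hp i hi) (hp j0 hj0) hε0.le
      (by exact_mod_cast (hmaxeps i hi).2 j0 hj0)).2
    rw [← hε3] at h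
    exact le_of_mul_le_mul_left (a := ε ^ 3) (by linarith) (by positivity)
  have htb' : ∀ i ∈ D, tb i = √(ε * abw * ab i / aw i) := fun i hi => by
    rw [htb i hi, sqrt_eq_rpow, mul_right_comm]
  have htw' : ∀ i ∈ D, tw i = √(ε * abw * aw i / ab i) := fun i hi => by
    rw [htw i hi, sqrt_eq_rpow, mul_right_comm]
  refine ⟨fun i hi => ?_, fun i hi => ?_, ?_, ?_⟩
  · rw [htb' i hi, htw' i hi, htbw]
    exact sqrt_mul_div_mul_sqrt_mul_div (hab i hi) (haw i hi) (by positivity)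
  · rw [htb' i hi, htw' i hi]
    exact geometric_rescaling_ratios_le (hab i hi) (haw i hi) habw hε0 (hupper i hi)
      (hlower i hi)
  · rw [htbw, div_mul_cancel_right₀ habw.ne', inv_le_iff_one_le_mul₀ hε0]
    nlinarith
  · rw [htbw, mul_div_cancel_right₀ _ habw.ne']

theorem optimal_modification_case_j0 {ι : Type*} (D : Finset ι)
    (ab aw : ι → ℝ) (abw : ℝ) (j0 : ι) (hj0 : j0 ∈ D)
    (hab : ∀ i ∈ D, 0 < ab i) (haw : ∀ i ∈ D, 0 < aw i) (habw : 0 < abw)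
    (ε : ℝ) (hε : ε = (ab j0 * aw j0 / abw) ^ ((1 : ℝ) / 3)) (hε1 : 1 ≤ ε)
    (hlow : ∀ i ∈ D, abw / ε ^ (3 : ℕ) ≤ ab i * aw i)
    (hmax : ∀ i ∈ D, ab i * aw i ≤ ab j0 * aw j0)
    (hmaxeps : ∀ i ∈ D,
      (max (ab i * aw i / abw) (abw / (ab i * aw i))) ^ ((1 : ℝ) / 3) ≤ ε ∧
      ∀ j ∈ D, (max (ab i * aw i / (ab j * aw j))
        (ab j * aw j / (ab i * aw i))) ^ ((1 : ℝ) / 4) ≤ ε)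
    (tb tw : ι → ℝ) (tbw : ℝ)
    (htb : ∀ i ∈ D, tb i = (ε * ab i * abw / aw i) ^ ((1 : ℝ) / 2))
    (htw : ∀ i ∈ D, tw i = (ε * aw i * abw / ab i) ^ ((1 : ℝ) / 2))
    (htbw : tbw = ε * abw) :
    (∀ i ∈ D, tb i * tw i = tbw) ∧
    (∀ i ∈ D, ab i / tb i ≤ ε ∧ tb i / ab i ≤ ε ∧
      aw i / tw i ≤ ε ∧ tw i / aw i ≤ ε) ∧
    abw / tbw ≤ ε ∧ tbw / abw ≤ ε :=
  optimal_modification_case_j0_general D ab aw abw j0 hj0 hab haw habw ε hε hε1 hmaxeps tb tw tbw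
    htb htw htbw
end

section
/- Let ε* denote the optimal value of the weight-based minimax problem (minimizing the maximum of ratios a_{bi}/(w_b/w_i), (w_b/w_i)/a_{bi}, a_{iw}/(w_i/w_w), (w_i/w_w)/a_{iw}, a_{bw}/(w_b/w_w), (w_b/w_w)/a_{bw} over positive normalized weights), and let η* denote the optimal value of the modification-based problem (minimizing the maximum deviation ratio over consistent modified systems ã with ã_{bi}·ã_{iw} = ã_{bw}). Then ε* = η*. -/
/-!
Positive weights `v` induce the consistent modification `ã_bi = v_b / v_i`, `ã_iw = v_i / v_w`,
`ã_bw = v_b / v_w`, with the same deviation ratios. Conversely a consistent positive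
modification is induced by the weights `v_b = ã_bw`, `v_w = 1`, `v_i = ã_iw` (consistency gives
`v_b / v_i = ã_bi`), and normalizing them to sum `1` changes no ratio. So both problems have the
same set of feasible objective values, hence the same infimum.
-/

lemma exists_sum_eq_one_div_eq_div {ι : Type*} {s : Finset ι} (hs : s.Nonempty) {v : ι → ℝ}
    (hv : ∀ k ∈ s, 0 < v k) :
    ∃ u : ι → ℝ, (∀ k ∈ s, 0 < u k) ∧ ∑ k ∈ s, u k = 1 ∧ ∀ x y, u x / u y = v x / v y := by
  have hS : 0 < ∑ k ∈ s, v k := Finset.sum_pos hv hs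
  refine ⟨fun k => v k / ∑ j ∈ s, v j, fun k hk => div_pos (hv k hk) hS, ?_,
    fun x y => div_div_div_cancel_right₀ hS.ne' _ _⟩
  rw [← Finset.sum_div, div_self hS.ne']

lemma exists_weights_of_consistent {ι : Type*} [DecidableEq ι] {D : Finset ι} {b w : ι}
    (hb : b ∉ D) (hw : w ∉ D) (hbw : b ≠ w) {tb tw : ι → ℝ} {tbw : ℝ}
    (htw : ∀ i ∈ D, 0 < tw i) (htbw : 0 < tbw) (hcons : ∀ i ∈ D, tb i * tw i = tbw) :
    ∃ v : ι → ℝ, (∀ k ∈ insert b (insert w D), 0 < v k) ∧ v b / v w = tbw ∧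
      ∀ i ∈ D, v b / v i = tb i ∧ v i / v w = tw i := by
  have hne : ∀ {i}, i ∈ D → i ≠ b ∧ i ≠ w := fun hi =>
    ⟨fun h => hb (h ▸ hi), fun h => hw (h ▸ hi)⟩
  refine ⟨fun k => if k = b then tbw else if k = w then 1 else tw k, ?_, ?_, fun i hi => ?_⟩
  · intro k hk
    rcases Finset.mem_insert.1 hk with rfl | hk
    · simpa using htbw
    rcases Finset.mem_insert.1 hk with rfl | hk
    · simp [hbw.symm]
    · simpa [(hne hk).1, (hne hk).2] using htw k hk
  · simp [hbw.symm]
  · simp only [(hne hi).1, (hne hi).2, hbw.symm, if_true, if_false, div_one, and_true]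
    rw [div_eq_iff (htw i hi).ne', hcons i hi]

theorem weight_and_modification_problems_equivalent_general
    {ι : Type*} [DecidableEq ι] (D : Finset ι) (b w : ι)
    (hb : b ∉ D) (hw : w ∉ D) (hbw : b ≠ w)
    (ab aw : ι → ℝ) (abw : ℝ) :
    sInf {e : ℝ | ∃ wv : ι → ℝ,
        (∀ k ∈ insert b (insert w D), 0 < wv k) ∧
        (∑ k ∈ insert b (insert w D), wv k) = 1 ∧
        (∀ i ∈ D, ab i / (wv b / wv i) ≤ e ∧ (wv b / wv i) / ab i ≤ e ∧
          aw i / (wv i / wv w) ≤ e ∧ (wv i / wv w) / aw i ≤ e) ∧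
        abw / (wv b / wv w) ≤ e ∧ (wv b / wv w) / abw ≤ e} =
    sInf {e : ℝ | ∃ tb tw : ι → ℝ, ∃ tbw : ℝ,
        (∀ i ∈ D, 0 < tb i) ∧ (∀ i ∈ D, 0 < tw i) ∧ 0 < tbw ∧
        (∀ i ∈ D, tb i * tw i = tbw) ∧
        (∀ i ∈ D, ab i / tb i ≤ e ∧ tb i / ab i ≤ e ∧
          aw i / tw i ≤ e ∧ tw i / aw i ≤ e) ∧
        abw / tbw ≤ e ∧ tbw / abw ≤ e} := by
  congr 1
  ext e
  constructor
  · rintro ⟨wv, hpos, -, hD, hbw₁, hbw₂⟩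
    have hb' := hpos b (by simp)
    have hw' := hpos w (by simp)
    have hi' : ∀ i ∈ D, 0 < wv i := fun i hi => hpos i (by simp [hi])
    exact ⟨fun i => wv b / wv i, fun i => wv i / wv w, wv b / wv w,
      fun i hi => div_pos hb' (hi' i hi), fun i hi => div_pos (hi' i hi) hw', div_pos hb' hw',
      fun i hi => div_mul_div_cancel₀ (hi' i hi).ne', hD, hbw₁, hbw₂⟩
  · rintro ⟨tb, tw, tbw, -, htw, htbw, hcons, hD, hbw₁, hbw₂⟩
    obtain ⟨v, hv, hvbw, hvD⟩ := exists_weights_of_consistent hb hw hbw htw htbw hcons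
    obtain ⟨u, hu, hsum, hratio⟩ := exists_sum_eq_one_div_eq_div (Finset.insert_nonempty _ _) hv
    refine ⟨u, hu, hsum, fun i hi => ?_, ?_, ?_⟩
    · simpa only [hratio, (hvD i hi).1, (hvD i hi).2] using hD i hi
    · simpa only [hratio, hvbw] using hbw₁
    · simpa only [hratio, hvbw] using hbw₂

theorem weight_and_modification_problems_equivalent
    {ι : Type*} [DecidableEq ι] (D : Finset ι) (b w : ι)
    (hb : b ∉ D) (hw : w ∉ D) (hbw : b ≠ w)
    (ab aw : ι → ℝ) (abw : ℝ)
    (hab : ∀ i ∈ D, 0 < ab i) (haw : ∀ i ∈ D, 0 < aw i) (habw : 0 < abw) :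
    sInf {e : ℝ | ∃ wv : ι → ℝ,
        (∀ k ∈ insert b (insert w D), 0 < wv k) ∧
        (∑ k ∈ insert b (insert w D), wv k) = 1 ∧
        (∀ i ∈ D, ab i / (wv b / wv i) ≤ e ∧ (wv b / wv i) / ab i ≤ e ∧
          aw i / (wv i / wv w) ≤ e ∧ (wv i / wv w) / aw i ≤ e) ∧
        abw / (wv b / wv w) ≤ e ∧ (wv b / wv w) / abw ≤ e} =
    sInf {e : ℝ | ∃ tb tw : ι → ℝ, ∃ tbw : ℝ,
        (∀ i ∈ D, 0 < tb i) ∧ (∀ i ∈ D, 0 < tw i) ∧ 0 < tbw ∧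
        (∀ i ∈ D, tb i * tw i = tbw) ∧
        (∀ i ∈ D, ab i / tb i ≤ e ∧ tb i / ab i ≤ e ∧
          aw i / tw i ≤ e ∧ tw i / aw i ≤ e) ∧
        abw / tbw ≤ e ∧ tbw / abw ≤ e} :=
  weight_and_modification_problems_equivalent_general D b w hb hw hbw ab aw abw
end

section
/- The optimal objective value satisfies ε* = max over i, j ∈ D of the four quantities (a_{bi}·a_{iw}/a_{bw})^{1/3}, (a_{bw}/(a_{bi}·a_{iw}))^{1/3}, (a_{bi}·a_{iw}/(a_{bj}·a_{jw}))^{1/4}, (a_{bj}·a_{jw}/(a_{bi}·a_{iw}))^{1/4}. -/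
/-!
Put `p i = ab i * aw i`. For a consistent system at level `e`, the value `t = tbw` is within
the factor `e` of `abw`, and, since `tb i * tw i = t`, within the factor `e ^ 2` of every `p i`.
Conversely such a `t` splits as `t = (ab i * s) * (aw i * s)` with `s = √(t / p i)`, which is
within `e` of `1`. Two-sided ratios form a multiplicative metric, so a common centre `t` exists
exactly when `p i / abw` and `abw / p i` are at most `e ^ 3` and `p i / p j` is at most `e ^ 4`;
taking roots, this says that the closed form is at most `e`.
-/

lemma Real.rpow_one_div_le_iff_le_pow {x y : ℝ} {n : ℕ} (hx : 0 ≤ x) (hy : 0 ≤ y) (hn : n ≠ 0) :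
    x ^ ((1 : ℝ) / n) ≤ y ↔ x ≤ y ^ n := by
  rw [one_div, Real.rpow_inv_le_iff_of_pos hx hy (Nat.cast_pos.2 (Nat.pos_of_ne_zero hn)),
    Real.rpow_natCast]

def RatioWithin (e a b : ℝ) : Prop := a / b ≤ e ∧ b / a ≤ e

namespace RatioWithin

variable {e f a b c d : ℝ}

lemma symm (h : RatioWithin e a b) : RatioWithin e b a := And.symm h

lemma mul (ha : 0 ≤ a) (hb : 0 ≤ b) (hc : 0 ≤ c) (hd : 0 ≤ d)
    (h : RatioWithin e a b) (h' : RatioWithin f c d) : RatioWithin (e * f) (a * c) (b * d) := by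
  constructor <;> rw [mul_div_mul_comm]
  · exact mul_le_mul h.1 h'.1 (div_nonneg hc hd) ((div_nonneg ha hb).trans h.1)
  · exact mul_le_mul h.2 h'.2 (div_nonneg hd hc) ((div_nonneg hb ha).trans h.2)

lemma trans (ha : 0 ≤ a) (hb : 0 < b) (hc : 0 ≤ c)
    (h : RatioWithin e a b) (h' : RatioWithin f b c) : RatioWithin (e * f) a c := by
  constructor
  · rw [← div_mul_div_cancel₀ (a := a) (c := c) hb.ne']
    exact mul_le_mul h.1 h'.1 (div_nonneg hb.le hc) ((div_nonneg ha hb.le).trans h.1)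
  · rw [← div_mul_div_cancel₀ (a := c) (c := a) hb.ne', mul_comm e]
    exact mul_le_mul h'.2 h.2 (div_nonneg hb.le ha) ((div_nonneg hc hb.le).trans h'.2)

end RatioWithin

noncomputable def analyticOptimum {ι : Type*} (D : Finset ι) (hD : D.Nonempty) (p : ι → ℝ)
    (c : ℝ) : ℝ :=
  D.sup' hD fun i =>
    max ((p i / c) ^ ((1 : ℝ) / 3))
      (max ((c / p i) ^ ((1 : ℝ) / 3))
        (D.sup' hD fun j => max ((p i / p j) ^ ((1 : ℝ) / 4)) ((p j / p i) ^ ((1 : ℝ) / 4))))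

def IsConsistentApprox {ι : Type*} (D : Finset ι) (ab aw : ι → ℝ) (abw e : ℝ) (tb tw : ι → ℝ)
    (tbw : ℝ) : Prop :=
  (∀ i ∈ D, 0 < tb i) ∧ (∀ i ∈ D, 0 < tw i) ∧ 0 < tbw ∧ (∀ i ∈ D, tb i * tw i = tbw) ∧
    (∀ i ∈ D, ab i / tb i ≤ e ∧ tb i / ab i ≤ e ∧ aw i / tw i ≤ e ∧ tw i / aw i ≤ e) ∧
    abw / tbw ≤ e ∧ tbw / abw ≤ e

section analyticOptimum

variable {ι : Type*} {D : Finset ι} {p : ι → ℝ} {c e : ℝ}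

lemma analyticOptimum_le_iff (hD : D.Nonempty) (hp : ∀ i ∈ D, 0 < p i) (hc : 0 < c)
    (he : 0 ≤ e) :
    analyticOptimum D hD p c ≤ e ↔
      ∀ i ∈ D, p i / c ≤ e ^ 3 ∧ c / p i ≤ e ^ 3 ∧ ∀ j ∈ D, p i / p j ≤ e ^ 4 := by
  have root3 {x : ℝ} (hx : 0 ≤ x) : x ^ ((1 : ℝ) / 3) ≤ e ↔ x ≤ e ^ 3 := by
    simpa using Real.rpow_one_div_le_iff_le_pow (n := 3) hx he (by norm_num)
  have root4 {x : ℝ} (hx : 0 ≤ x) : x ^ ((1 : ℝ) / 4) ≤ e ↔ x ≤ e ^ 4 := by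
    simpa using Real.rpow_one_div_le_iff_le_pow (n := 4) hx he (by norm_num)
  have ratio_nonneg {x y : ℝ} (hx : 0 < x) (hy : 0 < y) : 0 ≤ x / y := (div_pos hx hy).le
  simp only [analyticOptimum, Finset.sup'_le_iff, max_le_iff]
  constructor
  · intro h i hi
    obtain ⟨hic, hci, hpp⟩ := h i hi
    exact ⟨(root3 (ratio_nonneg (hp i hi) hc)).1 hic, (root3 (ratio_nonneg hc (hp i hi))).1 hci,
      fun j hj => (root4 (ratio_nonneg (hp i hi) (hp j hj))).1 (hpp j hj).1⟩
  · intro h i hi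
    refine ⟨(root3 (ratio_nonneg (hp i hi) hc)).2 (h i hi).1,
      (root3 (ratio_nonneg hc (hp i hi))).2 (h i hi).2.1, fun j hj => ⟨?_, ?_⟩⟩
    · exact (root4 (ratio_nonneg (hp i hi) (hp j hj))).2 ((h i hi).2.2 j hj)
    · exact (root4 (ratio_nonneg (hp j hj) (hp i hi))).2 ((h j hj).2.2 i hi)

lemma ratio_bounds_of_center {t : ℝ} (hp : ∀ i ∈ D, 0 < p i) (hc : 0 < c) (ht : 0 < t)
    (hct : RatioWithin e c t) (hpt : ∀ i ∈ D, RatioWithin (e ^ 2) (p i) t) :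
    ∀ i ∈ D, p i / c ≤ e ^ 3 ∧ c / p i ≤ e ^ 3 ∧ ∀ j ∈ D, p i / p j ≤ e ^ 4 := by
  intro i hi
  have hic : RatioWithin (e ^ 3) (p i) c := by
    convert (hpt i hi).trans (hp i hi).le ht hc.le hct.symm using 1
    ring
  refine ⟨hic.1, hic.2, fun j hj => ?_⟩
  have hij : RatioWithin (e ^ 4) (p i) (p j) := by
    convert (hpt i hi).trans (hp i hi).le ht (hp j hj).le (hpt j hj).symm using 1
    ring
  exact hij.1

lemma exists_center_of_ratio_bounds (hD : D.Nonempty) (hp : ∀ i ∈ D, 0 < p i) (hc : 0 < c)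
    (he : 0 ≤ e)
    (h : ∀ i ∈ D, p i / c ≤ e ^ 3 ∧ c / p i ≤ e ^ 3 ∧ ∀ j ∈ D, p i / p j ≤ e ^ 4) :
    ∃ t, 0 < t ∧ RatioWithin e c t ∧ ∀ i ∈ D, RatioWithin (e ^ 2) (p i) t := by
  obtain ⟨k, hk, hmax⟩ := D.exists_max_image p hD
  have he1 : 1 ≤ e := by
    have hkk := (h k hk).2.2 k hk
    rwa [div_self (hp k hk).ne', one_le_pow_iff_of_nonneg he (by norm_num)] at hkk
  have he0 : 0 < e := by linarith
  -- the least `t` with `c / t ≤ e` and `p i / t ≤ e ^ 2` for all `i`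
  set t := max (c / e) (p k / e ^ 2)
  have ht : 0 < t := lt_max_of_lt_left (div_pos hc he0)
  refine ⟨t, ht, ⟨?_, ?_⟩, fun i hi => ⟨?_, ?_⟩⟩
  · rw [div_le_iff₀ ht, ← div_le_iff₀' he0]
    exact le_max_left _ _
  · rw [div_le_iff₀ hc]
    refine max_le ((div_le_self hc.le he1).trans (le_mul_of_one_le_left hc.le he1)) ?_
    rw [div_le_iff₀ (by positivity)]
    exact ((div_le_iff₀ hc).1 (h k hk).1).trans_eq (by ring)
  · rw [div_le_iff₀ ht, ← div_le_iff₀' (by positivity)]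
    exact (div_le_div_of_nonneg_right (hmax i hi) (by positivity)).trans (le_max_right _ _)
  · rw [div_le_iff₀ (hp i hi)]
    refine max_le ?_ ?_
    · rw [div_le_iff₀ he0]
      exact ((div_le_iff₀ (hp i hi)).1 (h i hi).2.1).trans_eq (by ring)
    · rw [div_le_iff₀ (by positivity)]
      exact ((div_le_iff₀ (hp i hi)).1 ((h k hk).2.2 i hi)).trans_eq (by ring)

lemma exists_mul_eq_of_ratioWithin_sq {a b t : ℝ} (ha : 0 < a) (hb : 0 < b) (ht : 0 < t)
    (he : 0 ≤ e) (h : RatioWithin (e ^ 2) (a * b) t) :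
    ∃ x y, 0 < x ∧ 0 < y ∧ x * y = t ∧ RatioWithin e a x ∧ RatioWithin e b y := by
  set s := √(t / (a * b))
  have hs : 0 < s := Real.sqrt_pos.2 (by positivity)
  have hs_le : s ≤ e := (Real.sqrt_le_left he).2 h.2
  have hs_inv_le : s⁻¹ ≤ e := by
    rw [← Real.sqrt_inv, inv_div]
    exact (Real.sqrt_le_left he).2 h.1
  have scale (z : ℝ) (hz : 0 < z) : RatioWithin e z (z * s) := by
    rw [RatioWithin, div_mul_cancel_left₀ hz.ne', mul_div_cancel_left₀ _ hz.ne']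
    exact ⟨hs_inv_le, hs_le⟩
  refine ⟨a * s, b * s, by positivity, by positivity, ?_, scale a ha, scale b hb⟩
  calc a * s * (b * s) = a * b * (s * s) := by ring
    _ = t := by rw [Real.mul_self_sqrt (by positivity), mul_div_cancel₀ _ (by positivity)]

variable {ab aw tb tw : ι → ℝ} {abw tbw : ℝ}

lemma analyticOptimum_le_of_consistentApprox (hD : D.Nonempty) (hab : ∀ i ∈ D, 0 < ab i)
    (haw : ∀ i ∈ D, 0 < aw i) (habw : 0 < abw) (h : IsConsistentApprox D ab aw abw e tb tw tbw) :
    analyticOptimum D hD (fun i => ab i * aw i) abw ≤ e := by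
  obtain ⟨htb, htw, htbw, hprod, hdev, hcenter⟩ := h
  have hp : ∀ i ∈ D, 0 < ab i * aw i := fun i hi => mul_pos (hab i hi) (haw i hi)
  have he : 0 ≤ e := (div_pos habw htbw).le.trans hcenter.1
  refine (analyticOptimum_le_iff hD hp habw he).2
    (ratio_bounds_of_center hp habw htbw hcenter fun i hi => ?_)
  obtain ⟨hb₁, hb₂, hw₁, hw₂⟩ := hdev i hi
  have hmul := RatioWithin.mul (hab i hi).le (htb i hi).le (haw i hi).le (htw i hi).le
    ⟨hb₁, hb₂⟩ ⟨hw₁, hw₂⟩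
  rwa [hprod i hi, ← sq] at hmul

lemma exists_consistentApprox_analyticOptimum (hD : D.Nonempty) (hab : ∀ i ∈ D, 0 < ab i)
    (haw : ∀ i ∈ D, 0 < aw i) (habw : 0 < abw) :
    ∃ tb tw tbw, IsConsistentApprox D ab aw abw
      (analyticOptimum D hD (fun i => ab i * aw i) abw) tb tw tbw := by
  set M := analyticOptimum D hD (fun i => ab i * aw i) abw
  have hp : ∀ i ∈ D, 0 < ab i * aw i := fun i hi => mul_pos (hab i hi) (haw i hi)
  have hM : 0 ≤ M := by
    obtain ⟨i, hi⟩ := hD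
    exact (Real.rpow_nonneg (div_pos (hp i hi) habw).le _).trans
      (Finset.le_sup'_of_le _ hi (le_max_left _ _))
  obtain ⟨t, ht, hct, hpt⟩ := exists_center_of_ratio_bounds hD hp habw hM
    ((analyticOptimum_le_iff hD hp habw hM).1 le_rfl)
  choose! tb tw htb htw hprod hb hw using fun i hi =>
    exists_mul_eq_of_ratioWithin_sq (hab i hi) (haw i hi) ht hM (hpt i hi)
  exact ⟨tb, tw, t, htb, htw, ht, hprod,
    fun i hi => ⟨(hb i hi).1, (hb i hi).2, (hw i hi).1, (hw i hi).2⟩, hct⟩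

end analyticOptimum

theorem analytic_form_of_optimal_value
    {ι : Type*} (D : Finset ι) (hD : D.Nonempty)
    (ab aw : ι → ℝ) (abw : ℝ)
    (hab : ∀ i ∈ D, 0 < ab i) (haw : ∀ i ∈ D, 0 < aw i) (habw : 0 < abw) :
    sInf {e : ℝ | ∃ tb tw : ι → ℝ, ∃ tbw : ℝ,
        (∀ i ∈ D, 0 < tb i) ∧ (∀ i ∈ D, 0 < tw i) ∧ 0 < tbw ∧
        (∀ i ∈ D, tb i * tw i = tbw) ∧
        (∀ i ∈ D, ab i / tb i ≤ e ∧ tb i / ab i ≤ e ∧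
          aw i / tw i ≤ e ∧ tw i / aw i ≤ e) ∧
        abw / tbw ≤ e ∧ tbw / abw ≤ e} =
    D.sup' hD (fun i =>
      max ((ab i * aw i / abw) ^ ((1 : ℝ) / 3))
        (max ((abw / (ab i * aw i)) ^ ((1 : ℝ) / 3))
          (D.sup' hD (fun j =>
            max ((ab i * aw i / (ab j * aw j)) ^ ((1 : ℝ) / 4))
              ((ab j * aw j / (ab i * aw i)) ^ ((1 : ℝ) / 4)))))) :=
  IsLeast.csInf_eq ⟨exists_consistentApprox_analyticOptimum hD hab haw habw,
    fun _ ⟨_, _, _, h⟩ => analyticOptimum_le_of_consistentApprox hD hab haw habw h⟩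
end

section
/- If (ã*_{bo}, ã*_{ow}) is an optimally modified consistent system with optimal value η*, then for each i ∈ D, ã*_{bi} lies in the interval [max(a_{bi}/η*, ã*_{bw}/(η*·a_{iw})), min(η*·a_{bi}, η*·ã*_{bw}/a_{iw})], and ã*_{iw} = ã*_{bw}/ã*_{bi}. -/
/-! The deviation bounds at `i` confine `tb i` to `[ab i / η, η * ab i]` and `tw i` to
`[aw i / η, η * aw i]`; consistency `tb i = tbw / tw i` turns the second interval into the
second pair of bounds on `tb i`. -/

theorem mem_Icc_div_mul_of_div_le_of_div_le {a t η : ℝ} (ha : 0 < a) (ht : 0 < t)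
    (hat : a / t ≤ η) (hta : t / a ≤ η) : t ∈ Set.Icc (a / η) (η * a) := by
  have hη : 0 < η := (div_pos ha ht).trans_le hat
  refine ⟨(div_le_iff₀ hη).2 ?_, (div_le_iff₀ ha).1 hta⟩
  rw [mul_comm]
  exact (div_le_iff₀ ht).1 hat

theorem div_mem_Icc_div_of_mem_Icc {c x lo hi : ℝ} (hc : 0 ≤ c) (hlo : 0 < lo)
    (hx : x ∈ Set.Icc lo hi) : c / x ∈ Set.Icc (c / hi) (c / lo) :=
  ⟨div_le_div_of_nonneg_left hc (hlo.trans_le hx.1) hx.2,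
    div_le_div_of_nonneg_left hc hlo hx.1⟩

theorem mem_Icc_of_mul_eq_of_div_le_of_div_le {a s t c η : ℝ} (ha : 0 < a) (hs : 0 < s)
    (ht : 0 < t) (hst : s * t = c) (hat : a / t ≤ η) (hta : t / a ≤ η) :
    s ∈ Set.Icc (c / (η * a)) (η * c / a) := by
  have hη : 0 < η := (div_pos ha ht).trans_le hat
  have hs_eq : s = c / t := by rw [← hst, mul_div_cancel_right₀ _ ht.ne']
  have := div_mem_Icc_div_of_mem_Icc (hst ▸ (mul_pos hs ht).le) (div_pos ha hη)
    (mem_Icc_div_mul_of_div_le_of_div_le ha ht hat hta)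
  rwa [div_div_eq_mul_div, mul_comm c η, ← hs_eq] at this

theorem optimal_modified_pcs_interval_general
    {ι : Type*} (D : Finset ι)
    (ab aw : ι → ℝ) (abw : ℝ)
    (hab : ∀ i ∈ D, 0 < ab i) (haw : ∀ i ∈ D, 0 < aw i)
    (η : ℝ)
    (tb tw : ι → ℝ) (tbw : ℝ)
    (htb : ∀ i ∈ D, 0 < tb i) (htw : ∀ i ∈ D, 0 < tw i)
    (hcons : ∀ i ∈ D, tb i * tw i = tbw)
    (hach : (∀ i ∈ D, ab i / tb i ≤ η ∧ tb i / ab i ≤ η ∧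
          aw i / tw i ≤ η ∧ tw i / aw i ≤ η) ∧
        abw / tbw ≤ η ∧ tbw / abw ≤ η) :
    ∀ i ∈ D, tb i ∈ Set.Icc (max (ab i / η) (tbw / (η * aw i)))
        (min (η * ab i) (η * tbw / aw i)) ∧
      tw i = tbw / tb i := by
  intro i hi
  obtain ⟨hab_tb, htb_ab, haw_tw, htw_aw⟩ := hach.1 i hi
  refine ⟨?_, by rw [← hcons i hi, mul_div_cancel_left₀ _ (htb i hi).ne']⟩
  rw [← Set.Icc_inter_Icc]
  exact ⟨mem_Icc_div_mul_of_div_le_of_div_le (hab i hi) (htb i hi) hab_tb htb_ab,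
    mem_Icc_of_mul_eq_of_div_le_of_div_le (haw i hi) (htb i hi) (htw i hi) (hcons i hi)
      haw_tw htw_aw⟩

theorem optimal_modified_pcs_interval
    {ι : Type*} (D : Finset ι)
    (ab aw : ι → ℝ) (abw : ℝ)
    (hab : ∀ i ∈ D, 0 < ab i) (haw : ∀ i ∈ D, 0 < aw i) (habw : 0 < abw)
    (η : ℝ)
    (hη : η = sInf {e : ℝ | ∃ tb tw : ι → ℝ, ∃ tbw : ℝ,
        (∀ i ∈ D, 0 < tb i) ∧ (∀ i ∈ D, 0 < tw i) ∧ 0 < tbw ∧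
        (∀ i ∈ D, tb i * tw i = tbw) ∧
        (∀ i ∈ D, ab i / tb i ≤ e ∧ tb i / ab i ≤ e ∧
          aw i / tw i ≤ e ∧ tw i / aw i ≤ e) ∧
        abw / tbw ≤ e ∧ tbw / abw ≤ e})
    (tb tw : ι → ℝ) (tbw : ℝ)
    (htb : ∀ i ∈ D, 0 < tb i) (htw : ∀ i ∈ D, 0 < tw i) (htbw : 0 < tbw)
    (hcons : ∀ i ∈ D, tb i * tw i = tbw)
    (hach : (∀ i ∈ D, ab i / tb i ≤ η ∧ tb i / ab i ≤ η ∧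
          aw i / tw i ≤ η ∧ tw i / aw i ≤ η) ∧
        abw / tbw ≤ η ∧ tbw / abw ≤ η) :
    ∀ i ∈ D, tb i ∈ Set.Icc (max (ab i / η) (tbw / (η * aw i)))
        (min (η * ab i) (η * tbw / aw i)) ∧
      tw i = tbw / tb i :=
  optimal_modified_pcs_interval_general D ab aw abw hab haw η tb tw tbw htb htw hcons hach
end

section
/- Conversely, any system with ã_{bw} equal to the prescribed optimal value, ã_{bi} chosen in [max(a_{bi}/η*, ã_{bw}/(η*·a_{iw})), min(η*·a_{bi}, η*·ã_{bw}/a_{iw})] (assumed nonempty), ã_{iw} = ã_{bw}/ã_{bi}, and a_{bw}/ã_{bw} ≤ η*, ã_{bw}/a_{bw} ≤ η*, achieves a maximum deviation ratio at most η*, hence is an optimally modified system. -/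
/-! The prescribed interval for `ã_bi` is the intersection of `[a_bi/η, η a_bi]`, which bounds the
deviation of `ã_bi`, with the interval whose image under `t ↦ ã_bw / t` is `[a_iw/η, η a_iw]`,
which bounds the deviation of `ã_iw = ã_bw / ã_bi`. -/

open Set

lemma div_le_and_div_le_of_mem_Icc {a t η : ℝ} (ha : 0 < a) (hη : 0 < η)
    (ht : t ∈ Icc (a / η) (η * a)) : a / t ≤ η ∧ t / a ≤ η := by
  have htpos : 0 < t := (div_pos ha hη).trans_le ht.1
  refine ⟨?_, ?_⟩
  · rw [div_le_iff₀ htpos, ← div_le_iff₀' hη]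
    exact ht.1
  · rw [div_le_iff₀ ha]
    exact ht.2

lemma div_mem_Icc_of_mem_Icc {a s t η : ℝ} (ha : 0 < a) (hs : 0 < s) (hη : 0 < η)
    (ht : t ∈ Icc (s / (η * a)) (η * s / a)) : s / t ∈ Icc (a / η) (η * a) := by
  have htpos : 0 < t := (div_pos hs (mul_pos hη ha)).trans_le ht.1
  constructor
  · rw [div_le_div_iff₀ hη htpos, mul_comm a, mul_comm s, ← le_div_iff₀ ha]
    exact ht.2
  · rw [div_le_iff₀ htpos, ← div_le_iff₀' (mul_pos hη ha)]
    exact ht.1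

theorem interval_choice_is_optimal_general
    {ι : Type*} (D : Finset ι)
    (ab aw : ι → ℝ)
    (hab : ∀ i ∈ D, 0 < ab i) (haw : ∀ i ∈ D, 0 < aw i)
    (η : ℝ) (hη1 : 1 ≤ η)
    (tb tw : ι → ℝ) (tbw : ℝ) (htbw : 0 < tbw)
    (htb : ∀ i ∈ D, tb i ∈ Set.Icc (max (ab i / η) (tbw / (η * aw i)))
        (min (η * ab i) (η * tbw / aw i)))
    (htw : ∀ i ∈ D, tw i = tbw / tb i) :
    (∀ i ∈ D, tb i * tw i = tbw) ∧
    (∀ i ∈ D, ab i / tb i ≤ η ∧ tb i / ab i ≤ η ∧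
      aw i / tw i ≤ η ∧ tw i / aw i ≤ η) := by
  have hη : 0 < η := zero_lt_one.trans_le hη1
  have hIcc : ∀ i ∈ D, tb i ∈ Icc (ab i / η) (η * ab i) ∧
      tb i ∈ Icc (tbw / (η * aw i)) (η * tbw / aw i) := fun i hi => by
    simpa only [← Icc_inter_Icc, mem_inter_iff] using htb i hi
  refine ⟨fun i hi => ?_, fun i hi => ?_⟩
  · have htbi : 0 < tb i := (div_pos (hab i hi) hη).trans_le (hIcc i hi).1.1
    rw [htw i hi, mul_div_cancel₀ _ htbi.ne']
  · obtain ⟨hb, hw⟩ := hIcc i hi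
    have htwi : tw i ∈ Icc (aw i / η) (η * aw i) :=
      htw i hi ▸ div_mem_Icc_of_mem_Icc (haw i hi) htbw hη hw
    exact and_assoc.mp ⟨div_le_and_div_le_of_mem_Icc (hab i hi) hη hb,
      div_le_and_div_le_of_mem_Icc (haw i hi) hη htwi⟩

theorem interval_choice_is_optimal
    {ι : Type*} (D : Finset ι)
    (ab aw : ι → ℝ) (abw : ℝ)
    (hab : ∀ i ∈ D, 0 < ab i) (haw : ∀ i ∈ D, 0 < aw i) (habw : 0 < abw)
    (η : ℝ) (hη1 : 1 ≤ η)
    (tb tw : ι → ℝ) (tbw : ℝ) (htbw : 0 < tbw)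
    (htbwr1 : abw / tbw ≤ η) (htbwr2 : tbw / abw ≤ η)
    (htb : ∀ i ∈ D, tb i ∈ Set.Icc (max (ab i / η) (tbw / (η * aw i)))
        (min (η * ab i) (η * tbw / aw i)))
    (htw : ∀ i ∈ D, tw i = tbw / tb i) :
    (∀ i ∈ D, tb i * tw i = tbw) ∧
    (∀ i ∈ D, ab i / tb i ≤ η ∧ tb i / ab i ≤ η ∧
      aw i / tw i ≤ η ∧ tw i / aw i ≤ η) :=
  interval_choice_is_optimal_general D ab aw hab haw η hη1 tb tw tbw htbw htb htw
end

section
/- For a_{bw} ≥ 1, the consistency index CI = max(a_{bw}^{1/3}, a_{bw}^{1/2}) equals a_{bw}^{1/2}, and hence the consistency ratio CR = ε*/a_{bw}^{1/2} satisfies 0 < CR ≤ 1 (equivalently, 1 ≤ ε* ≤ a_{bw}^{1/2}) whenever all comparison values a_{bi}, a_{iw} lie in [1, a_{bw}]. -/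
/-! Every product `a_{bi} a_{iw}` lies in `[1, a_{bw}²]`, so each ratio under a cube root in `ε*`
is at most `a_{bw}` and each ratio under a fourth root is at most `a_{bw}²`; both roots are then at
most `√a_{bw}`. The term with `i = j` equals `1`, which gives `1 ≤ ε*`. -/

open Set

namespace Real

lemma rpow_le_rpow_of_le_of_exponent_le {x a r s : ℝ} (hx : 0 ≤ x) (hxa : x ≤ a) (ha : 1 ≤ a)
    (hr : 0 ≤ r) (hrs : r ≤ s) : x ^ r ≤ a ^ s :=
  (rpow_le_rpow hx hxa hr).trans (rpow_le_rpow_of_exponent_le ha hrs)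

lemma rpow_quarter_le_rpow_half_of_le_sq {x a : ℝ} (hx : 0 ≤ x) (ha : 0 ≤ a) (hxa : x ≤ a ^ 2) :
    x ^ ((1 : ℝ) / 4) ≤ a ^ ((1 : ℝ) / 2) := by
  have hsq : (a ^ 2) ^ ((1 : ℝ) / 4) = a ^ ((1 : ℝ) / 2) := by
    rw [← rpow_natCast_mul ha]
    norm_num
  exact hsq ▸ rpow_le_rpow hx hxa (by norm_num)

end Real

section Ratios

variable {a p q : ℝ}

lemma mul_mem_Icc_one_sq {x y : ℝ} (hx : x ∈ Icc 1 a) (hy : y ∈ Icc 1 a) :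
    x * y ∈ Icc 1 (a ^ 2) :=
  ⟨one_le_mul_of_one_le_of_one_le hx.1 hy.1,
    sq a ▸ mul_le_mul hx.2 hy.2 (by linarith [hy.1]) (by linarith [hx.1, hx.2])⟩

lemma div_le_of_le_sq (ha : 0 < a) (hp : p ≤ a ^ 2) : p / a ≤ a := by
  rwa [div_le_iff₀ ha, ← sq]

lemma div_le_of_mem_Icc_one {M : ℝ} (hp : p ∈ Icc 1 M) (hq : q ∈ Icc 1 M) : p / q ≤ M :=
  (div_le_self (by linarith [hp.1]) hq.1).trans hp.2

end Ratios

theorem consistency_ratio_normalized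
    {ι : Type*} (D : Finset ι) (hD : D.Nonempty)
    (ab aw : ι → ℝ) (abw : ℝ) (habw : 1 ≤ abw)
    (hab : ∀ i ∈ D, ab i ∈ Set.Icc 1 abw) (haw : ∀ i ∈ D, aw i ∈ Set.Icc 1 abw)
    (ε : ℝ)
    (hε : ε = D.sup' hD (fun i =>
      max ((ab i * aw i / abw) ^ ((1 : ℝ) / 3))
        (max ((abw / (ab i * aw i)) ^ ((1 : ℝ) / 3))
          (D.sup' hD (fun j =>
            max ((ab i * aw i / (ab j * aw j)) ^ ((1 : ℝ) / 4))
              ((ab j * aw j / (ab i * aw i)) ^ ((1 : ℝ) / 4))))))) :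
    max (abw ^ ((1 : ℝ) / 3)) (abw ^ ((1 : ℝ) / 2)) = abw ^ ((1 : ℝ) / 2) ∧
    1 ≤ ε ∧ ε ≤ abw ^ ((1 : ℝ) / 2) ∧
    0 < ε / abw ^ ((1 : ℝ) / 2) ∧ ε / abw ^ ((1 : ℝ) / 2) ≤ 1 := by
  have hp : ∀ i ∈ D, ab i * aw i ∈ Icc 1 (abw ^ 2) := fun i hi =>
    mul_mem_Icc_one_sq (hab i hi) (haw i hi)
  have hp0 : ∀ i ∈ D, 0 < ab i * aw i := fun i hi => one_pos.trans_le (hp i hi).1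
  have habw0 : 0 ≤ abw := by linarith
  have cube_root_le {x : ℝ} (hx : 0 ≤ x) (hxa : x ≤ abw) : x ^ ((1 : ℝ) / 3) ≤ abw ^ ((1 : ℝ) / 2) :=
    Real.rpow_le_rpow_of_le_of_exponent_le hx hxa habw (by norm_num) (by norm_num)
  have quartic_root_le {i j : ι} (hi : i ∈ D) (hj : j ∈ D) :
      (ab i * aw i / (ab j * aw j)) ^ ((1 : ℝ) / 4) ≤ abw ^ ((1 : ℝ) / 2) :=
    Real.rpow_quarter_le_rpow_half_of_le_sq (div_nonneg (hp0 i hi).le (hp0 j hj).le) habw0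
      (div_le_of_mem_Icc_one (hp i hi) (hp j hj))
  have hle : ε ≤ abw ^ ((1 : ℝ) / 2) := hε ▸ Finset.sup'_le _ _ fun i hi =>
    max_le (cube_root_le (by positivity [hp0 i hi]) (div_le_of_le_sq (by linarith) (hp i hi).2))
      (max_le (cube_root_le (by positivity [hp0 i hi]) (div_le_self habw0 (hp i hi).1))
        (Finset.sup'_le _ _ fun j hj => max_le (quartic_root_le hi hj) (quartic_root_le hj hi)))
  have hge : 1 ≤ ε := by
    obtain ⟨i, hi⟩ := hD
    have hdiag : (ab i * aw i / (ab i * aw i)) ^ ((1 : ℝ) / 4) = 1 := by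
      rw [div_self (hp0 i hi).ne', Real.one_rpow]
    exact hε ▸ Finset.le_sup'_of_le _ hi (le_max_of_le_right (le_max_of_le_right
      (Finset.le_sup'_of_le _ hi (le_max_of_le_left hdiag.ge))))
  have hsqrt_pos : 0 < abw ^ ((1 : ℝ) / 2) := by positivity
  exact ⟨max_eq_right (Real.rpow_le_rpow_of_exponent_le habw (by norm_num)), hge, hle,
    by positivity, (div_le_one hsqrt_pos).2 hle⟩
end
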